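/- arXiv:0912.3425 — 2 statements merged into one kernel-verified Lean document; each statement's English description precedes it below -/
import Mathlib

section
/- If (W, W') is an exchangeable pair of R^d-valued random vectors with E[W W^t] = Σ and E[W' - W | W] = -Λ W, then Λ Σ = Σ Λ^t. -/
open MeasureTheory ProbabilityTheory Matrix

/-!
Write `C = E[W' Wᵀ]`. Exchangeability makes `C` symmetric, and conditioning on `W` turns the
regression hypothesis into `C - Σ = E[(W' - W) Wᵀ] = -ΛΣ`. Hence `ΛΣ = Σ - C` is symmetric,
that is `ΛΣ = (ΛΣ)ᵀ = ΣΛᵀ`.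
-/

namespace MeasureTheory

theorem integral_mul_condExp_of_stronglyMeasurable {Ω : Type*} {m m₀ : MeasurableSpace Ω}
    {μ : Measure[m₀] Ω} [IsFiniteMeasure μ] (hm : m ≤ m₀) {f g : Ω → ℝ}
    (hg : StronglyMeasurable[m] g) (hgf : Integrable (g * f) μ) (hf : Integrable f μ) :
    ∫ ω, g ω * μ[f | m] ω ∂μ = ∫ ω, g ω * f ω ∂μ := calc
  ∫ ω, g ω * μ[f | m] ω ∂μ = ∫ ω, μ[g * f | m] ω ∂μ :=
    integral_congr_ae (condExp_mul_of_stronglyMeasurable_left hg hgf hf).symm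
  _ = ∫ ω, g ω * f ω ∂μ := integral_condExp hm

end MeasureTheory

namespace ProbabilityTheory

variable {Ω : Type*} [MeasurableSpace Ω] {μ : Measure Ω} {ι κ : Type*}

noncomputable def crossMoment (μ : Measure Ω) (X : Ω → ι → ℝ) (Y : Ω → κ → ℝ) : Matrix ι κ ℝ :=
  Matrix.of fun i j => ∫ ω, X ω i * Y ω j ∂μ

@[simp]
theorem crossMoment_apply (X : Ω → ι → ℝ) (Y : Ω → κ → ℝ) (i : ι) (j : κ) :
    crossMoment μ X Y i j = ∫ ω, X ω i * Y ω j ∂μ := rfl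

theorem crossMoment_transpose (X : Ω → ι → ℝ) (Y : Ω → κ → ℝ) :
    (crossMoment μ X Y)ᵀ = crossMoment μ Y X := by
  ext i j
  simp only [transpose_apply, crossMoment_apply, mul_comm]

theorem IdentDistrib.crossMoment_eq {Ω' : Type*} [MeasurableSpace Ω'] {ν : Measure Ω'}
    {X : Ω → ι → ℝ} {Y : Ω → κ → ℝ} {X' : Ω' → ι → ℝ} {Y' : Ω' → κ → ℝ}
    (h : IdentDistrib (fun ω => (X ω, Y ω)) (fun ω => (X' ω, Y' ω)) μ ν) :
    crossMoment μ X Y = crossMoment ν X' Y' := by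
  ext i j
  exact (h.comp (((measurable_pi_apply i).comp measurable_fst).mul
    ((measurable_pi_apply j).comp measurable_snd))).integral_eq

theorem crossMoment_sub_left [Fintype ι] [Fintype κ] {X X' : Ω → ι → ℝ} {Y : Ω → κ → ℝ}
    (hX : MemLp X 2 μ) (hX' : MemLp X' 2 μ) (hY : MemLp Y 2 μ) :
    crossMoment μ (X - X') Y = crossMoment μ X Y - crossMoment μ X' Y := by
  ext i j
  simp only [crossMoment_apply, Matrix.sub_apply, Pi.sub_apply, sub_mul]
  exact integral_sub ((hX.eval i).integrable_mul (hY.eval j))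
    ((hX'.eval i).integrable_mul (hY.eval j))

theorem crossMoment_mulVec_left [Fintype ι] [Fintype κ] {X : Ω → ι → ℝ} {Y : Ω → κ → ℝ}
    (hX : MemLp X 2 μ) (hY : MemLp Y 2 μ) (A : Matrix ι ι ℝ) :
    crossMoment μ (fun ω => A *ᵥ X ω) Y = A * crossMoment μ X Y := by
  ext i j
  simp only [crossMoment_apply, mulVec, dotProduct, Finset.sum_mul, Matrix.mul_apply]
  rw [integral_finsetSum _ fun k _ => ?_]
  · simp only [mul_assoc, integral_const_mul]
  · simpa only [Pi.mul_apply, mul_assoc] using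
      ((hX.eval k).integrable_mul (hY.eval j)).const_mul (A i k)

theorem crossMoment_eq_mul_of_condExp_eq_mulVec [IsFiniteMeasure μ] [Fintype ι]
    {W : Ω → ι → ℝ} {Y : Ω → ι → ℝ} (hWm : Measurable W) (hW : MemLp W 2 μ) (hY : MemLp Y 2 μ)
    (A : Matrix ι ι ℝ)
    (hreg : ∀ i, μ[fun ω => Y ω i | MeasurableSpace.comap W MeasurableSpace.pi]
      =ᵐ[μ] fun ω => (A *ᵥ W ω) i) :
    crossMoment μ Y W = A * crossMoment μ W W := by
  rw [← crossMoment_mulVec_left hW hW]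
  ext i j
  have hWj : StronglyMeasurable[MeasurableSpace.comap W MeasurableSpace.pi] fun ω => W ω j :=
    ((measurable_pi_apply j).comp (comap_measurable W)).stronglyMeasurable
  calc ∫ ω, Y ω i * W ω j ∂μ = ∫ ω, W ω j * μ[fun ω => Y ω i | _] ω ∂μ := by
        simp_rw [mul_comm (Y _ i)]
        exact (integral_mul_condExp_of_stronglyMeasurable hWm.comap_le hWj
          ((hW.eval j).integrable_mul (hY.eval i)) ((hY.eval i).integrable one_le_two)).symm
    _ = ∫ ω, (A *ᵥ W ω) i * W ω j ∂μ :=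
        integral_congr_ae <| (hreg i).mono fun ω hω => by simp only [hω, mul_comm]

/-- When `W` is not measurable, `σ(W)` is not a sub-σ-algebra and `μ[· | σ(W)]` is the junk
value `0`. -/
theorem mul_crossMoment_eq_zero_of_condExp_eq_mulVec [Fintype ι]
    {W : Ω → ι → ℝ} {Y : Ω → ι → ℝ} (hWm : ¬ Measurable W) (hW : MemLp W 2 μ)
    (A : Matrix ι ι ℝ)
    (hreg : ∀ i, μ[fun ω => Y ω i | MeasurableSpace.comap W MeasurableSpace.pi]
      =ᵐ[μ] fun ω => (A *ᵥ W ω) i) :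
    A * crossMoment μ W W = 0 := by
  rw [← crossMoment_mulVec_left hW hW]
  ext i j
  have hAW : (fun ω => (A *ᵥ W ω) i) =ᵐ[μ] 0 := by
    simpa only [condExp_of_not_le (mt measurable_iff_comap_le.mpr hWm)] using (hreg i).symm
  simpa using integral_congr_ae (hAW.mul (Filter.EventuallyEq.refl _ fun ω => W ω j))

end ProbabilityTheory

theorem exchangeable_pair_lambda_sigma_symm_general
    {Ω : Type*} [MeasurableSpace Ω] (μ : Measure Ω) [IsProbabilityMeasure μ]
    {d : ℕ} (W W' : Ω → Fin d → ℝ)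
    (hW : MeasureTheory.MemLp W 2 μ) (hW' : MeasureTheory.MemLp W' 2 μ)
    (hExch : IdentDistrib (fun ω => (W ω, W' ω)) (fun ω => (W' ω, W ω)) μ μ)
    (S : Matrix (Fin d) (Fin d) ℝ)
    (hS : ∀ i j, S i j = ∫ ω, W ω i * W ω j ∂μ)
    (Λ : Matrix (Fin d) (Fin d) ℝ)
    (hlin : ∀ i, μ[(fun ω => W' ω i - W ω i) |
        MeasurableSpace.comap W MeasurableSpace.pi]
      =ᵐ[μ] fun ω => -(Λ.mulVec (W ω) i)) :
    Λ * S = S * Λᵀ := by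
  have hS_eq : S = crossMoment μ W W := Matrix.ext hS
  have hSsymm : Sᵀ = S := by rw [hS_eq, crossMoment_transpose]
  have hreg : ∀ i, μ[fun ω => (W' - W) ω i | MeasurableSpace.comap W MeasurableSpace.pi]
      =ᵐ[μ] fun ω => ((-Λ) *ᵥ W ω) i := by
    simpa only [neg_mulVec, Pi.neg_apply, Pi.sub_apply] using hlin
  suffices (Λ * S)ᵀ = Λ * S by rw [← this, transpose_mul, hSsymm]
  by_cases hWm : Measurable W
  · have hcross : (crossMoment μ W' W)ᵀ = crossMoment μ W' W := by
      rw [crossMoment_transpose, hExch.crossMoment_eq]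
    have hΛS : Λ * S = S - crossMoment μ W' W := by
      have hmoment := crossMoment_eq_mul_of_condExp_eq_mulVec hWm hW (hW'.sub hW) (-Λ) hreg
      rw [crossMoment_sub_left hW' hW hW, neg_mul, ← hS_eq] at hmoment
      rw [← neg_sub, hmoment, neg_neg]
    rw [hΛS, transpose_sub, hSsymm, hcross]
  · have hΛS := mul_crossMoment_eq_zero_of_condExp_eq_mulVec hWm hW (-Λ) hreg
    rw [neg_mul, neg_eq_zero, ← hS_eq] at hΛS
    rw [hΛS, transpose_zero]

/-- If `(W, W')` is an exchangeable pair in `ℝ^d` with `E[W Wᵀ] = Σ` and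
`E[W' - W | W] = -ΛW`, then `ΛΣ = ΣΛᵀ`. -/
theorem exchangeable_pair_lambda_sigma_symm
    {Ω : Type*} [MeasurableSpace Ω] (μ : Measure Ω) [IsProbabilityMeasure μ]
    {d : ℕ} (W W' : Ω → Fin d → ℝ)
    (hW : MeasureTheory.MemLp W 2 μ) (hW' : MeasureTheory.MemLp W' 2 μ)
    (hExch : IdentDistrib (fun ω => (W ω, W' ω)) (fun ω => (W' ω, W ω)) μ μ)
    (hmean : ∀ i, ∫ ω, W ω i ∂μ = 0)
    (S : Matrix (Fin d) (Fin d) ℝ)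
    (hS : ∀ i j, S i j = ∫ ω, W ω i * W ω j ∂μ)
    (Λ : Matrix (Fin d) (Fin d) ℝ)
    (hlin : ∀ i, μ[(fun ω => W' ω i - W ω i) |
        MeasurableSpace.comap W MeasurableSpace.pi]
      =ᵐ[μ] fun ω => -(Λ.mulVec (W ω) i)) :
    Λ * S = S * Λᵀ :=
  exchangeable_pair_lambda_sigma_symm_general μ W W' hW hW' hExch S hS Λ hlin
end

section
/- Let F = Σ_{n=1}^d J_n(f_n) where J_n(f_n) = Σ_{1≤i₁<…<i_n≤d} n! f_n(i₁,…,i_n) X_{i₁}⋯X_{i_n} and X₁,…,X_d are i.i.d. mean-zero random variables. If F' and J'_n(f_n) are obtained by replacing X_I (I uniform on {1,…,d}, independent) by an independent copy, then E[J'_n(f_n) − J_n(f_n) | W] = −(n/d) J_n(f_n), where W = (J₁(f₁),…,J_d(f_d)). -/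
/-!
Condition first on `σ(X) ⊇ σ(W)` and split according to the value of `I`: since `I` is uniform
and independent of `(X, X*)`, the left-hand side is the average over `i` of the effect of
resampling the `i`-th coordinate. Resampling `X_i` annihilates, against any `σ(X)`-measurable
test function, every monomial `∏_{j ∈ α} X_j` with `i ∈ α` (because `X*_i` is centred and
independent of `X`) and leaves the other monomials unchanged. Averaging over `i` therefore removes
each monomial with weight `|α| / d = n / d`.
-/

open MeasureTheory ProbabilityTheory Finset

lemma ProbabilityTheory.iIndepFun.integrable_finset_prod {Ω ι : Type*} [MeasurableSpace Ω]
    {μ : Measure Ω} {f : ι → Ω → ℝ} (hf : iIndepFun f μ) (hm : ∀ i, Measurable (f i))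
    (hi : ∀ i, Integrable (f i) μ) (s : Finset ι) :
    Integrable (fun ω => ∏ i ∈ s, f i ω) μ := by
  classical
  induction s using Finset.cons_induction with
  | empty => have := hf.isProbabilityMeasure; simp
  | cons a s ha ih =>
    simp only [Finset.prod_cons]
    have hindep : IndepFun (∏ j ∈ s, f j) (f a) μ := hf.indepFun_finsetProd_of_notMem hm ha
    have hprod := hindep.symm.integrable_mul (hi a) (by rwa [Finset.prod_fn])
    rwa [Finset.prod_fn] at hprod

lemma ProbabilityTheory.Indep.integral_mul_eq_zero {Ω : Type*} {m mΩ : MeasurableSpace Ω}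
    {μ : Measure Ω} {Z H : Ω → ℝ} (hZ : Measurable Z) (hm : m ≤ mΩ)
    (h : Indep (MeasurableSpace.comap Z inferInstance) m μ) (hH : Measurable[m] H)
    (hZ0 : ∫ ω, Z ω ∂μ = 0) :
    ∫ ω, Z ω * H ω ∂μ = 0 := by
  have hZH : IndepFun Z H μ :=
    (IndepFun_iff_Indep _ _ _).2 (indep_of_indep_of_le_right h hH.comap_le)
  have hprod := hZH.integral_mul_eq_mul_integral hZ.aestronglyMeasurable
    (hH.mono hm le_rfl).aestronglyMeasurable
  simpa [hZ0] using hprod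

lemma integral_eq_sum_setIntegral_preimage_singleton {Ω ι : Type*} [MeasurableSpace Ω]
    {μ : Measure Ω} [Fintype ι] [MeasurableSpace ι] [MeasurableSingletonClass ι] {I : Ω → ι}
    (hI : Measurable I) {G : ι → Ω → ℝ} (hG : ∀ i, Integrable (G i) μ) :
    ∫ ω, G (I ω) ω ∂μ = ∑ i, ∫ ω in I ⁻¹' {i}, G i ω ∂μ := by
  classical
  have hsplit : (fun ω => G (I ω) ω) = fun ω => ∑ i, (I ⁻¹' {i}).indicator (G i) ω := by
    funext ω
    simp [Set.indicator_apply]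
  rw [hsplit, integral_finsetSum _ fun i _ => (hG i).indicator (hI (measurableSet_singleton i))]
  exact Finset.sum_congr rfl fun i _ => integral_indicator (hI (measurableSet_singleton i))

lemma integral_comp_eq_sum_measureReal_mul_of_indep {Ω ι : Type*} {m mΩ : MeasurableSpace Ω}
    {μ : Measure Ω} [Fintype ι] [MeasurableSpace ι] [MeasurableSingletonClass ι] {I : Ω → ι}
    (hI : Measurable I) (hm : m ≤ mΩ) (hindep : Indep (MeasurableSpace.comap I inferInstance) m μ)
    {G : ι → Ω → ℝ} (hGm : ∀ i, Measurable[m] (G i)) (hG : ∀ i, Integrable (G i) μ) :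
    ∫ ω, G (I ω) ω ∂μ = ∑ i, μ.real (I ⁻¹' {i}) * ∫ ω, G i ω ∂μ := by
  rw [integral_eq_sum_setIntegral_preimage_singleton hI hG]
  refine Finset.sum_congr rfl fun i _ => ?_
  exact (indep_of_indep_of_le_right hindep (hGm i).comap_le).setIntegral_eq_mul (f := id)
    hI.comap_le ((hGm i).mono hm le_rfl).aemeasurable ⟨{i}, measurableSet_singleton i, rfl⟩
    aestronglyMeasurable_id

def homogeneousSum {ι : Type*} [Fintype ι] (n : ℕ) (c : Finset ι → ℝ) (x : ι → ℝ) : ℝ :=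
  ∑ α ∈ (univ.powersetCard n : Finset (Finset ι)), c α * ∏ j ∈ α, x j

lemma measurable_homogeneousSum {ι : Type*} [Fintype ι] (n : ℕ) (c : Finset ι → ℝ) :
    Measurable (homogeneousSum n c) := by
  unfold homogeneousSum
  fun_prop

lemma Measurable.homogeneousSum_comp {Ω ι : Type*} [Fintype ι] {m : MeasurableSpace Ω}
    {Z : ι → Ω → ℝ} (hZ : ∀ j, Measurable[m] (Z j)) (n : ℕ) (c : Finset ι → ℝ) :
    Measurable[m] (fun ω => homogeneousSum n c (fun j => Z j ω)) :=
  (measurable_homogeneousSum n c).comp (measurable_pi_lambda _ hZ)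

local notation "σ[" X "]" => ⨆ k, MeasurableSpace.comap (X k) inferInstance

section Resampling

variable {Ω ι : Type*} {mΩ : MeasurableSpace Ω} {μ : Measure Ω} {X X' : ι → Ω → ℝ}

lemma measurable_apply_iSup_comap (X : ι → Ω → ℝ) (k : ι) : Measurable[σ[X]] (X k) :=
  measurable_iff_comap_le.2 (le_iSup (fun k => MeasurableSpace.comap (X k) _) k)

lemma indep_comap_copy_iSup_comap (hIndep : iIndepFun (Sum.elim X X') μ)
    (hm : ∀ s, Measurable (Sum.elim X X' s)) (i : ι) :
    Indep (MeasurableSpace.comap (X' i) inferInstance) σ[X] μ := by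
  refine indep_of_indep_of_le (indep_iSup_of_disjoint (fun s => (hm s).comap_le) hIndep.iIndep
    (S := {Sum.inr i}) (T := Set.range Sum.inl) (by simp)) ?_ ?_
  · exact le_iSup₂_of_le (Sum.inr i) rfl le_rfl
  · exact iSup_le fun k => le_iSup₂_of_le (Sum.inl k) ⟨k, rfl⟩ le_rfl

lemma integrable_prod_resample [DecidableEq ι]
    (hIndep : iIndepFun (Sum.elim X X') μ) (hm : ∀ s, Measurable (Sum.elim X X' s))
    (hint : ∀ s, Integrable (Sum.elim X X' s) μ) (i : ι) (α : Finset ι) :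
    Integrable (fun ω => ∏ j ∈ α, if j = i then X' j ω else X j ω) μ := by
  set g : ι → ι ⊕ ι := fun j => if j = i then Sum.inr j else Sum.inl j
  have hg : Function.Injective g := by
    intro j k hjk
    by_cases hj : j = i <;> by_cases hk : k = i <;> simp_all [g]
  convert (hIndep.precomp hg).integrable_finset_prod (fun _ => hm _) (fun _ => hint _) α
    using 3 with ω j
  by_cases hj : j = i <;> simp [g, hj]

lemma integrable_prod_original
    (hIndep : iIndepFun (Sum.elim X X') μ) (hm : ∀ s, Measurable (Sum.elim X X' s))
    (hint : ∀ s, Integrable (Sum.elim X X' s) μ) (α : Finset ι) :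
    Integrable (fun ω => ∏ j ∈ α, X j ω) μ :=
  (hIndep.precomp Sum.inl_injective).integrable_finset_prod (fun _ => hm _) (fun _ => hint _) α

lemma integrable_homogeneousSum_comp [Fintype ι] {Z : ι → Ω → ℝ} (n : ℕ) (c : Finset ι → ℝ)
    (hZ : ∀ α, Integrable (fun ω => ∏ j ∈ α, Z j ω) μ) :
    Integrable (fun ω => homogeneousSum n c (fun j => Z j ω)) μ :=
  integrable_finsetSum _ fun α _ => (hZ α).const_mul (c α)

lemma setIntegral_prod_resample_sub_prod [DecidableEq ι]
    (hIndep : iIndepFun (Sum.elim X X') μ) (hm : ∀ s, Measurable (Sum.elim X X' s))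
    (hint : ∀ s, Integrable (Sum.elim X X' s) μ) {i : ι}
    (hmean : ∫ ω, X' i ω ∂μ = 0) (α : Finset ι) {s : Set Ω} (hs : MeasurableSet[σ[X]] s) :
    ∫ ω in s, ((∏ j ∈ α, if j = i then X' j ω else X j ω) - ∏ j ∈ α, X j ω) ∂μ
      = if i ∈ α then -∫ ω in s, ∏ j ∈ α, X j ω ∂μ else 0 := by
  have hmX : σ[X] ≤ mΩ := iSup_le fun k => (hm (Sum.inl k)).comap_le
  split_ifs with hi
  · have hsplit : ∀ ω, (∏ j ∈ α, if j = i then X' j ω else X j ω)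
        = X' i ω * ∏ j ∈ α.erase i, X j ω := fun ω => by
      rw [← mul_prod_erase α _ hi, if_pos rfl]
      exact congrArg _ (prod_congr rfl fun j hj => if_neg (ne_of_mem_erase hj))
    have hQ : ∫ ω in s, (∏ j ∈ α, if j = i then X' j ω else X j ω) ∂μ = 0 := by
      rw [← integral_indicator (hmX s hs)]
      have hind : s.indicator (fun ω => ∏ j ∈ α, if j = i then X' j ω else X j ω)
          = fun ω => X' i ω * s.indicator (fun ω => ∏ j ∈ α.erase i, X j ω) ω := by
        funext ω
        simp only [hsplit]
        exact Set.indicator_mul_right _ _ _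
      rw [hind]
      exact (indep_comap_copy_iSup_comap hIndep hm i).integral_mul_eq_zero (hm (Sum.inr i)) hmX
        ((Finset.measurable_prod _ fun j _ => measurable_apply_iSup_comap X j).indicator hs) hmean
    rw [integral_sub (integrable_prod_resample hIndep hm hint i α).integrableOn
      (integrable_prod_original hIndep hm hint α).integrableOn, hQ, zero_sub]
  · have hQP : ∀ ω, (∏ j ∈ α, if j = i then X' j ω else X j ω) = ∏ j ∈ α, X j ω := fun ω =>
      prod_congr rfl fun j hj => if_neg (ne_of_mem_of_not_mem hj hi)
    simp [hQP]

lemma setIntegral_homogeneousSum_resample_sub [Fintype ι] [DecidableEq ι]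
    (hIndep : iIndepFun (Sum.elim X X') μ) (hm : ∀ s, Measurable (Sum.elim X X' s))
    (hint : ∀ s, Integrable (Sum.elim X X' s) μ) {i : ι}
    (hmean : ∫ ω, X' i ω ∂μ = 0) (n : ℕ) (c : Finset ι → ℝ) {s : Set Ω}
    (hs : MeasurableSet[σ[X]] s) :
    ∫ ω in s, (homogeneousSum n c (fun j => if j = i then X' j ω else X j ω)
        - homogeneousSum n c (fun j => X j ω)) ∂μ
      = -∑ α ∈ univ.powersetCard n, if i ∈ α then c α * ∫ ω in s, ∏ j ∈ α, X j ω ∂μ else 0 := by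
  simp only [homogeneousSum, ← sum_sub_distrib, ← mul_sub]
  rw [integral_finsetSum _ fun α _ => ?integrable, ← sum_neg_distrib]
  case integrable =>
    exact (((integrable_prod_resample hIndep hm hint i α).sub
      (integrable_prod_original hIndep hm hint α)).const_mul (c α)).integrableOn
  refine sum_congr rfl fun α _ => ?_
  rw [integral_const_mul, setIntegral_prod_resample_sub_prod hIndep hm hint hmean α hs]
  split_ifs <;> ring

lemma setIntegral_homogeneousSum_resample_uniform_sub [Fintype ι] [DecidableEq ι]
    [MeasurableSpace ι] [MeasurableSingletonClass ι]
    (hIndep : iIndepFun (Sum.elim X X') μ) (hm : ∀ s, Measurable (Sum.elim X X' s))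
    (hint : ∀ s, Integrable (Sum.elim X X' s) μ)
    (hmean : ∀ i, ∫ ω, X' i ω ∂μ = 0) {I : Ω → ι} (hI : Measurable I)
    {mY : MeasurableSpace Ω} (hmY : mY ≤ mΩ)
    (hXY : ∀ j, Measurable[mY] (X j)) (hX'Y : ∀ j, Measurable[mY] (X' j))
    (hIY : Indep (MeasurableSpace.comap I inferInstance) mY μ)
    (hunif : ∀ i, μ.real (I ⁻¹' {i}) = (Fintype.card ι : ℝ)⁻¹) (n : ℕ) (c : Finset ι → ℝ)
    {s : Set Ω} (hs : MeasurableSet[σ[X]] s) :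
    ∫ ω in s, (homogeneousSum n c (fun j => if j = I ω then X' j ω else X j ω)
        - homogeneousSum n c (fun j => X j ω)) ∂μ
      = -(n / Fintype.card ι) * ∫ ω in s, homogeneousSum n c (fun j => X j ω) ∂μ := by
  have hsY : MeasurableSet[mY] s := iSup_le (fun k => (hXY k).comap_le) s hs
  set D : ι → Ω → ℝ := fun i => s.indicator fun ω =>
    homogeneousSum n c (fun j => if j = i then X' j ω else X j ω)
      - homogeneousSum n c (fun j => X j ω)
  have hDm : ∀ i, Measurable[mY] (D i) := fun i =>
    ((Measurable.homogeneousSum_comp (Z := fun j ω => if j = i then X' j ω else X j ω)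
      (fun j => by split_ifs; exacts [hX'Y j, hXY j]) n c).sub
      (Measurable.homogeneousSum_comp hXY n c)).indicator hsY
  have hD : ∀ i, Integrable (D i) μ := fun i =>
    ((integrable_homogeneousSum_comp n c (integrable_prod_resample hIndep hm hint i)).sub
      (integrable_homogeneousSum_comp n c (integrable_prod_original hIndep hm hint))).indicator
      (hmY s hsY)
  calc ∫ ω in s, (homogeneousSum n c (fun j => if j = I ω then X' j ω else X j ω)
        - homogeneousSum n c (fun j => X j ω)) ∂μ
      = ∫ ω, D (I ω) ω ∂μ := by
        rw [← integral_indicator (hmY s hsY)]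
        congr 1 with ω
    _ = ∑ i, (Fintype.card ι : ℝ)⁻¹ *
          -∑ α ∈ univ.powersetCard n, if i ∈ α then c α * ∫ ω in s, ∏ j ∈ α, X j ω ∂μ else 0 := by
      rw [integral_comp_eq_sum_measureReal_mul_of_indep hI hmY hIY hDm hD]
      refine sum_congr rfl fun i _ => ?_
      rw [hunif, integral_indicator (hmY s hsY),
        setIntegral_homogeneousSum_resample_sub hIndep hm hint (hmean i) n c hs]
    _ = -(n / Fintype.card ι) * ∫ ω in s, homogeneousSum n c (fun j => X j ω) ∂μ := by
      have hsum : ∫ ω in s, homogeneousSum n c (fun j => X j ω) ∂μ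
          = ∑ α ∈ univ.powersetCard n, c α * ∫ ω in s, ∏ j ∈ α, X j ω ∂μ := by
        simp only [homogeneousSum]
        rw [integral_finsetSum _ fun α _ =>
          ((integrable_prod_original hIndep hm hint α).const_mul (c α)).integrableOn]
        simp_rw [integral_const_mul]
      have hcount : ∀ α ∈ univ.powersetCard n,
          ∑ i : ι, (if i ∈ α then c α * ∫ ω in s, ∏ j ∈ α, X j ω ∂μ else 0)
            = n * (c α * ∫ ω in s, ∏ j ∈ α, X j ω ∂μ) := fun α hα => by
        rw [sum_ite_mem, univ_inter, sum_const, (mem_powersetCard.1 hα).2, nsmul_eq_mul]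
      rw [hsum, ← mul_sum, sum_neg_distrib, sum_comm, sum_congr rfl hcount, ← mul_sum]
      ring

lemma condExp_homogeneousSum_resample_sub [Fintype ι] [DecidableEq ι]
    [MeasurableSpace ι] [MeasurableSingletonClass ι]
    (hIndep : iIndepFun (Sum.elim X X') μ) (hm : ∀ s, Measurable (Sum.elim X X' s))
    (hint : ∀ s, Integrable (Sum.elim X X' s) μ)
    (hmean : ∀ i, ∫ ω, X' i ω ∂μ = 0) {I : Ω → ι} (hI : Measurable I)
    {mY : MeasurableSpace Ω} (hmY : mY ≤ mΩ)
    (hXY : ∀ j, Measurable[mY] (X j)) (hX'Y : ∀ j, Measurable[mY] (X' j))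
    (hIY : Indep (MeasurableSpace.comap I inferInstance) mY μ)
    (hunif : ∀ i, μ.real (I ⁻¹' {i}) = (Fintype.card ι : ℝ)⁻¹) (n : ℕ) (c : Finset ι → ℝ)
    {J J' : Ω → ℝ} (hJ : ∀ ω, J ω = homogeneousSum n c (fun j => X j ω))
    (hJ' : ∀ ω, J' ω = homogeneousSum n c (fun j => if j = I ω then X' j ω else X j ω))
    (hJint : Integrable J μ) (hJ'int : Integrable J' μ) {m : MeasurableSpace Ω}
    (hmX : m ≤ σ[X]) (hJm : Measurable[m] J) :
    μ[fun ω => J' ω - J ω | m] =ᵐ[μ] fun ω => -(n / Fintype.card ι) * J ω := by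
  have := hIndep.isProbabilityMeasure
  have hmΩ : m ≤ mΩ := hmX.trans (iSup_le fun k => (hm (Sum.inl k)).comap_le)
  refine (ae_eq_condExp_of_forall_setIntegral_eq hmΩ (hJ'int.sub hJint)
    (fun s _ _ => (hJint.const_mul _).integrableOn) (fun s hs _ => ?_)
    (hJm.const_mul _).stronglyMeasurable.aestronglyMeasurable).symm
  simp only [Pi.sub_apply, hJ, hJ']
  rw [integral_const_mul, setIntegral_homogeneousSum_resample_uniform_sub hIndep hm hint hmean hI
    hmY hXY hX'Y hIY hunif n c (hmX s hs)]

end Resampling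

theorem chaos_embedding_linear_regression_general
    {Ω : Type*} [MeasurableSpace Ω] (μ : Measure Ω)
    (d : ℕ)
    (X X' : Fin d → Ω → ℝ) (I : Ω → Fin d)
    (hXm : ∀ i, Measurable (X i)) (hX'm : ∀ i, Measurable (X' i))
    (hIm : Measurable I)
    -- the variables X₁,…,X_d, X*₁,…,X*_d are independent, identically distributed
    -- with mean zero, and integrable
    (hIndep : iIndepFun (m := fun _ => (inferInstance : MeasurableSpace ℝ))
      (Sum.elim X X') μ)
    (hint : ∀ s, Integrable (Sum.elim X X' s) μ)
    (hmean : ∀ s, ∫ ω, Sum.elim X X' s ω ∂μ = 0)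
    -- I is uniform on {1,…,d} and independent of everything else
    (hIIndep : IndepFun I (fun ω (s : Sum (Fin d) (Fin d)) => Sum.elim X X' s ω) μ)
    (hIunif : ∀ i : Fin d, μ {ω | I ω = i} = (d : ENNReal)⁻¹)
    -- the coefficient functions and the multilinear sums Jₙ, J'ₙ
    (f : ℕ → Finset (Fin d) → ℝ)
    (J J' : ℕ → Ω → ℝ)
    (hJ : ∀ n ω, J n ω =
      ∑ α ∈ (Finset.univ.powersetCard n : Finset (Finset (Fin d))),
        (n.factorial : ℝ) * f n α * ∏ i ∈ α, X i ω)
    (hJ' : ∀ n ω, J' n ω =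
      ∑ α ∈ (Finset.univ.powersetCard n : Finset (Finset (Fin d))),
        (n.factorial : ℝ) * f n α * ∏ i ∈ α, (if i = I ω then X' i ω else X i ω))
    (hJint : ∀ n, Integrable (J n) μ) (hJ'int : ∀ n, Integrable (J' n) μ)
    -- the embedding vector W = (J₁(f₁),…,J_d(f_d))
    (W : Ω → Fin d → ℝ)
    (hW : ∀ ω (k : Fin d), W ω k = J ((k : ℕ) + 1) ω) :
    ∀ n : ℕ, 1 ≤ n → n ≤ d →
      μ[(fun ω => J' n ω - J n ω) | MeasurableSpace.comap W MeasurableSpace.pi]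
        =ᵐ[μ] fun ω => -((n : ℝ) / d) * J n ω := by
  intro n hn hnd
  have hm : ∀ s, Measurable (Sum.elim X X' s) := by rintro (k | k); exacts [hXm k, hX'm k]
  have hcoord : ∀ s, Measurable[MeasurableSpace.comap (fun ω s => Sum.elim X X' s ω)
      MeasurableSpace.pi] (Sum.elim X X' s) := fun s =>
    measurable_iff_comap_le.2 (MeasurableSpace.comap_le_comap_pi (g := Sum.elim X X') s)
  have hJX : ∀ n, Measurable[σ[X]] (J n) := fun n => by
    rw [funext (hJ n)]
    exact Measurable.homogeneousSum_comp (measurable_apply_iSup_comap X) n _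
  have hWk : ∀ k, Measurable[σ[X]] fun ω => W ω k := fun k => by simpa only [hW] using hJX _
  have hWX : Measurable[σ[X]] W := by fun_prop
  have hJW : Measurable[MeasurableSpace.comap W MeasurableSpace.pi] (J n) := by
    obtain ⟨k, rfl⟩ : ∃ k : Fin d, (k : ℕ) + 1 = n := ⟨⟨n - 1, by omega⟩, by simp; omega⟩
    simpa only [Function.comp_def, hW] using (measurable_pi_apply k).comp (comap_measurable W)
  have hunif : ∀ i, μ.real (I ⁻¹' {i}) = (Fintype.card (Fin d) : ℝ)⁻¹ := fun i => by
    simp [measureReal_def, Set.preimage, hIunif]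
  simpa using condExp_homogeneousSum_resample_sub hIndep hm hint (fun i => hmean (Sum.inr i))
    hIm (measurable_pi_lambda _ hm).comap_le (fun j => hcoord (Sum.inl j))
    (fun j => hcoord (Sum.inr j)) ((IndepFun_iff_Indep _ _ _).1 hIIndep) hunif n _ (hJ n) (hJ' n)
    (hJint n) (hJ'int n) hWX.comap_le hJW

/-- For `F = ∑ₙ Jₙ(fₙ)` with `Jₙ(fₙ) = ∑_{i₁<…<iₙ} n! fₙ(i₁,…,iₙ) X_{i₁}⋯X_{iₙ}` built
from i.i.d. mean-zero variables, and the coupling that replaces `X_I` (with `I` uniform,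
independent) by an independent copy, one has `E[J'ₙ(fₙ) - Jₙ(fₙ) | W] = -(n/d) Jₙ(fₙ)`,
where `W = (J₁(f₁),…,J_d(f_d))`. -/
theorem chaos_embedding_linear_regression
    {Ω : Type*} [MeasurableSpace Ω] (μ : Measure Ω) [IsProbabilityMeasure μ]
    (d : ℕ) (hd : 0 < d)
    (X X' : Fin d → Ω → ℝ) (I : Ω → Fin d)
    (hXm : ∀ i, Measurable (X i)) (hX'm : ∀ i, Measurable (X' i))
    (hIm : Measurable I)
    -- the variables X₁,…,X_d, X*₁,…,X*_d are independent, identically distributed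
    -- with mean zero, and integrable
    (hIndep : iIndepFun (m := fun _ => (inferInstance : MeasurableSpace ℝ))
      (Sum.elim X X') μ)
    (hIdent : ∀ s t : Sum (Fin d) (Fin d),
      IdentDistrib (Sum.elim X X' s) (Sum.elim X X' t) μ μ)
    (hint : ∀ s, Integrable (Sum.elim X X' s) μ)
    (hmean : ∀ s, ∫ ω, Sum.elim X X' s ω ∂μ = 0)
    -- I is uniform on {1,…,d} and independent of everything else
    (hIIndep : IndepFun I (fun ω (s : Sum (Fin d) (Fin d)) => Sum.elim X X' s ω) μ)
    (hIunif : ∀ i : Fin d, μ {ω | I ω = i} = (d : ENNReal)⁻¹)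
    -- the coefficient functions and the multilinear sums Jₙ, J'ₙ
    (f : ℕ → Finset (Fin d) → ℝ)
    (J J' : ℕ → Ω → ℝ)
    (hJ : ∀ n ω, J n ω =
      ∑ α ∈ (Finset.univ.powersetCard n : Finset (Finset (Fin d))),
        (n.factorial : ℝ) * f n α * ∏ i ∈ α, X i ω)
    (hJ' : ∀ n ω, J' n ω =
      ∑ α ∈ (Finset.univ.powersetCard n : Finset (Finset (Fin d))),
        (n.factorial : ℝ) * f n α * ∏ i ∈ α, (if i = I ω then X' i ω else X i ω))
    (hJint : ∀ n, Integrable (J n) μ) (hJ'int : ∀ n, Integrable (J' n) μ)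
    -- the embedding vector W = (J₁(f₁),…,J_d(f_d))
    (W : Ω → Fin d → ℝ)
    (hW : ∀ ω (k : Fin d), W ω k = J ((k : ℕ) + 1) ω) :
    ∀ n : ℕ, 1 ≤ n → n ≤ d →
      μ[(fun ω => J' n ω - J n ω) | MeasurableSpace.comap W MeasurableSpace.pi]
        =ᵐ[μ] fun ω => -((n : ℝ) / d) * J n ω :=
  chaos_embedding_linear_regression_general μ d X X' I hXm hX'm hIm hIndep hint hmean hIIndep hIunif
    f J J' hJ hJ' hJint hJ'int W hW
end
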